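/- Let p be a prime with 2 a primitive root modulo p. Then there exists a double circulant binary code of parameters [2p, p, d] with d > w for every positive real number w satisfying 2|B_{2p}(w)| < p·2^p, where B_{2p}(w) is the set of nonzero vectors of length 2p and weight at most w. -/

import Mathlib

open Finset
open scoped Classical

/-- The number of nonzero vectors of `F_2^N` of Hamming weight at most `v` (real radius). -/
noncomputable def ballCardR (N : ℕ) (v : ℝ) : ℕ :=
  (Finset.univ.filter (fun x : Fin N → ZMod 2 => x ≠ 0 ∧ (hammingNorm x : ℝ) ≤ v)).card

/-!
A pair `x = (x₁, x₂)` lies in the code of `a` iff `circulant a *ᵥ x₂ = x₁` (characteristic 2).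
Since `2` is primitive modulo `p`, the cyclotomic polynomial `Φ_p` is irreducible over `𝔽₂`;
evaluating at a root of `Φ_p` turns circulant multiplication into multiplication in a field, so
`circulant a *ᵥ b = 0` forces `a` or `b` to be constant. Hence a nonzero `x` of weight `< p` lies
in the code of at most two vectors `a`. The `p` cyclic shifts of `x` are distinct, of the same
weight, and lie in the same codes, so double counting shows that at most `2 |B_{2p}(w)| / p < 2^p`
vectors `a` have a codeword of weight `≤ w`.
-/

open Polynomial Matrix

namespace DoubleCirculant

theorem irreducible_cyclotomic_zmod_of_orderOf_eq_totient {ℓ n : ℕ} [Fact ℓ.Prime] (hℓn : ¬ ℓ ∣ n)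
    (hord : orderOf (ℓ : ZMod n) = n.totient) : Irreducible (cyclotomic n (ZMod ℓ)) :=
  ZMod.irreducible_of_dvd_cyclotomic_of_natDegree hℓn dvd_rfl <| by
    rw [natDegree_cyclotomic, ← orderOf_units, ZMod.coe_unitOfCoprime, hord]

section CyclicPoly

variable {R : Type*} [CommRing R] {n : ℕ} [NeZero n]

noncomputable def cyclicPoly (v : ZMod n → R) : R[X] := ∑ i, C (v i) * X ^ i.val

theorem coeff_cyclicPoly_val (v : ZMod n → R) (i : ZMod n) :
    (cyclicPoly v).coeff i.val = v i := by
  rw [cyclicPoly, finsetSum_coeff, Finset.sum_eq_single i]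
  · simp
  · intro j _ hji
    simp only [coeff_C_mul_X_pow]
    exact if_neg fun h => hji (ZMod.val_injective n h).symm
  · simp

@[simp]
theorem cyclicPoly_zero : cyclicPoly (0 : ZMod n → R) = 0 := by
  simp [cyclicPoly]

theorem cyclicPoly_injective : Function.Injective (cyclicPoly (R := R) (n := n)) :=
  fun a b h => funext fun i => by rw [← coeff_cyclicPoly_val a, h, coeff_cyclicPoly_val]

theorem natDegree_cyclicPoly_lt (v : ZMod n → R) : (cyclicPoly v).natDegree < n := by
  have hle : (cyclicPoly v).natDegree ≤ n - 1 :=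
    natDegree_sum_le_of_forall_le _ _ fun i _ =>
      (natDegree_C_mul_X_pow_le _ _).trans (Nat.le_sub_one_of_lt (ZMod.val_lt i))
  have := NeZero.pos n
  omega

theorem cyclicPoly_const (c : R) :
    cyclicPoly (fun _ : ZMod n => c) = C c * ∑ k ∈ range n, X ^ k := by
  rw [cyclicPoly, Finset.mul_sum]
  exact Finset.sum_nbij' ZMod.val (↑) (fun i _ => mem_range.mpr (ZMod.val_lt i))
    (fun _ _ => mem_univ _) (fun i _ => ZMod.natCast_zmod_val i)
    (fun k hk => ZMod.val_cast_of_lt (mem_range.mp hk)) fun _ _ => rfl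

theorem aeval_cyclicPoly {A : Type*} [CommRing A] [Algebra R A] (ζ : A) (v : ZMod n → R) :
    aeval ζ (cyclicPoly v) = ∑ i, algebraMap R A (v i) * ζ ^ i.val := by
  simp [cyclicPoly]

theorem aeval_cyclicPoly_circulant_mulVec {A : Type*} [CommRing A] [Algebra R A] {ζ : A}
    (hζ : ζ ^ n = 1) (a b : ZMod n → R) :
    aeval ζ (cyclicPoly (circulant a *ᵥ b)) = aeval ζ (cyclicPoly a) * aeval ζ (cyclicPoly b) := by
  have hpow (i j : ZMod n) : ζ ^ (i + j).val = ζ ^ i.val * ζ ^ j.val := by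
    rw [ZMod.val_add, ← pow_eq_pow_mod _ hζ, pow_add]
  simp only [aeval_cyclicPoly, mulVec, dotProduct, circulant_apply, map_sum, map_mul,
    Finset.sum_mul, Finset.mul_sum]
  rw [Finset.sum_comm]
  refine Finset.sum_congr rfl fun j _ => Eq.symm ?_
  refine Fintype.sum_equiv (Equiv.addRight j) _ _ fun i => ?_
  rw [Equiv.coe_addRight, add_sub_cancel_right, hpow]
  ring

theorem eq_const_of_cyclotomic_dvd_cyclicPoly [Nontrivial R] (hn : n.Prime) {v : ZMod n → R}
    (h : cyclotomic n R ∣ cyclicPoly v) : ∃ c, v = fun _ => c := by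
  have := Fact.mk hn
  obtain ⟨t, ht⟩ := h
  by_cases ht0 : t = 0
  · refine ⟨0, cyclicPoly_injective ?_⟩
    rw [ht, ht0, mul_zero, ← cyclicPoly_zero (R := R) (n := n)]
    rfl
  have hdeg := natDegree_cyclicPoly_lt v
  rw [ht, (cyclotomic.monic n R).natDegree_mul' ht0, natDegree_cyclotomic,
    Nat.totient_prime hn] at hdeg
  refine ⟨t.coeff 0, cyclicPoly_injective ?_⟩
  rw [ht, cyclicPoly_const, ← cyclotomic_prime, mul_comm, ← eq_C_of_natDegree_eq_zero (by omega)]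

end CyclicPoly

section CirculantKernel

variable {K : Type*} [Field K] {n : ℕ} [NeZero n]

theorem eq_const_or_eq_const_of_circulant_mulVec_eq_zero (hn : n.Prime)
    (hirr : Irreducible (cyclotomic n K)) {a b : ZMod n → K} (h : circulant a *ᵥ b = 0) :
    (∃ c, a = fun _ => c) ∨ ∃ c, b = fun _ => c := by
  have := Fact.mk hirr
  have hζ : AdjoinRoot.root (cyclotomic n K) ^ n = 1 := by
    have := AdjoinRoot.mk_eq_zero.mpr (cyclotomic.dvd_X_pow_sub_one n K)
    rwa [map_sub, map_pow, AdjoinRoot.mk_X, map_one, sub_eq_zero] at this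
  have hprod := aeval_cyclicPoly_circulant_mulVec hζ a b
  rw [h, cyclicPoly_zero, map_zero, eq_comm, mul_eq_zero, AdjoinRoot.aeval_eq,
    AdjoinRoot.aeval_eq, AdjoinRoot.mk_eq_zero, AdjoinRoot.mk_eq_zero] at hprod
  exact hprod.imp (eq_const_of_cyclotomic_dvd_cyclicPoly hn)
    (eq_const_of_cyclotomic_dvd_cyclicPoly hn)

end CirculantKernel

section Hamming

variable {ι ι' β : Type*} [Fintype ι] [Fintype ι'] [Zero β] [DecidableEq β]

theorem hammingNorm_comp_equiv (v : ι → β) (e : ι' ≃ ι) : hammingNorm (v ∘ e) = hammingNorm v :=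
  Finset.card_equiv e (by simp)

theorem hammingNorm_const {c : β} (hc : c ≠ 0) :
    hammingNorm (fun _ : ι => c) = Fintype.card ι := by
  simp [hammingNorm, hc]

theorem hammingNorm_add_hammingNorm_eq_zero_iff {x : (ι → β) × (ι' → β)} :
    hammingNorm x.1 + hammingNorm x.2 = 0 ↔ x = 0 := by
  simp [Prod.ext_iff]

theorem hammingNorm_sumElim (u v : ι → β) :
    hammingNorm (Sum.elim u v) = hammingNorm u + hammingNorm v := by
  simp [hammingNorm, card_filter, Fintype.sum_sum_type]
  congr

theorem eq_zero_of_hammingNorm_const_lt {c : β}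
    (h : hammingNorm (fun _ : ι => c) < Fintype.card ι) : c = 0 := by
  by_contra hc
  exact h.ne (hammingNorm_const hc)

end Hamming

section Shift

variable {α : Type*} {n : ℕ}

def cyclicShift (k : ZMod n) (v : ZMod n → α) : ZMod n → α := fun i => v (i - k)

theorem periodic_of_cyclicShift_eq {k k' : ZMod n} {v : ZMod n → α}
    (h : cyclicShift k v = cyclicShift k' v) : Function.Periodic v (k - k') := fun j => by
  simpa [cyclicShift, add_sub_assoc] using (congrFun h (j + k)).symm

variable [NeZero n]

theorem hammingNorm_cyclicShift [Zero α] [DecidableEq α] (k : ZMod n) (v : ZMod n → α) :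
    hammingNorm (cyclicShift k v) = hammingNorm v :=
  hammingNorm_comp_equiv v (Equiv.subRight k)

theorem circulant_mulVec_cyclicShift [NonUnitalNonAssocSemiring α] (k : ZMod n)
    (a b : ZMod n → α) : circulant a *ᵥ cyclicShift k b = cyclicShift k (circulant a *ᵥ b) := by
  funext i
  refine Fintype.sum_equiv (Equiv.subRight k) _ _ fun j => ?_
  simp [cyclicShift, sub_sub_sub_cancel_right]

theorem eq_zero_of_periodic_of_hammingNorm_lt [Zero α] [DecidableEq α] (hn : n.Prime)
    {v : ZMod n → α} {k : ZMod n} (hk : k ≠ 0) (h : Function.Periodic v k)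
    (hv : hammingNorm v < n) : v = 0 := by
  have := Fact.mk hn
  -- every `j` is a multiple of `k`, since `ZMod n` is a field
  have hconst : v = fun _ => v 0 := funext fun j => by
    simpa [mul_assoc, inv_mul_cancel₀ hk] using (h.nat_mul (j * k⁻¹).val).eq
  have h0 : v 0 = 0 := eq_zero_of_hammingNorm_const_lt (ι := ZMod n) (by rwa [ZMod.card, ← hconst])
  rw [hconst, h0]
  rfl

theorem injective_cyclicShift_pair [Zero α] [DecidableEq α] (hn : n.Prime)
    {x : (ZMod n → α) × (ZMod n → α)} (hx : x ≠ 0) (hwt : hammingNorm x.1 + hammingNorm x.2 < n) :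
    Function.Injective fun k => Prod.map (cyclicShift k) (cyclicShift k) x := by
  intro k k' h
  by_contra hkk
  obtain ⟨h₁, h₂⟩ := Prod.ext_iff.mp h
  have hk := sub_ne_zero.mpr hkk
  exact hx <| Prod.ext
    (eq_zero_of_periodic_of_hammingNorm_lt hn hk (periodic_of_cyclicShift_eq h₁) (by omega))
    (eq_zero_of_periodic_of_hammingNorm_lt hn hk (periodic_of_cyclicShift_eq h₂) (by omega))

end Shift

section Counting

variable {K : Type*} [Field K] [Fintype K] [DecidableEq K] {n : ℕ} [NeZero n]

theorem card_filter_circulant_mulVec_eq_le (hn : n.Prime) (hirr : Irreducible (cyclotomic n K))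
    {x : (ZMod n → K) × (ZMod n → K)} (hx : x ≠ 0) (hwt : hammingNorm x.1 + hammingNorm x.2 < n) :
    #{a | circulant a *ᵥ x.2 = x.1} ≤ Fintype.card K := by
  obtain he | ⟨a₀, ha₀⟩ := Finset.eq_empty_or_nonempty {a | circulant a *ᵥ x.2 = x.1}
  · simp [he]
  have hsub : ({a | circulant a *ᵥ x.2 = x.1} : Finset _) ⊆
      univ.image fun c : K => a₀ + fun _ => c := by
    intro a ha
    rw [mem_filter] at ha ha₀
    have hdiff : circulant (a - a₀) *ᵥ x.2 = 0 := by
      rw [circulant_sub, sub_mulVec, ha.2, ha₀.2, sub_self]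
    obtain ⟨c, hc⟩ | ⟨c, hc⟩ := eq_const_or_eq_const_of_circulant_mulVec_eq_zero hn hirr hdiff
    · exact mem_image.mpr ⟨c, mem_univ _, by rw [← hc, add_sub_cancel]⟩
    · have h0 : c = 0 := eq_zero_of_hammingNorm_const_lt (ι := ZMod n) <| by
        rw [← hc, ZMod.card]
        omega
      have hx₂ : x.2 = 0 := hc.trans (by rw [h0]; rfl)
      exact absurd (Prod.ext (by rw [← ha.2, hx₂, mulVec_zero]; rfl) hx₂) hx
  calc #{a | circulant a *ᵥ x.2 = x.1} ≤ #(univ.image fun c : K => a₀ + fun _ => c) :=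
        card_le_card hsub
    _ ≤ Fintype.card K := card_image_le

theorem exists_forall_circulant_mulVec_ne (hn : n.Prime) (hirr : Irreducible (cyclotomic n K))
    (S : Finset ((ZMod n → K) × (ZMod n → K)))
    (hS_shift : ∀ x ∈ S, ∀ k, Prod.map (cyclicShift k) (cyclicShift k) x ∈ S)
    (hS : ∀ x ∈ S, x ≠ 0 ∧ hammingNorm x.1 + hammingNorm x.2 < n)
    (hcard : Fintype.card K * #S < n * Fintype.card K ^ n) :
    ∃ a : ZMod n → K, ∀ x ∈ S, circulant a *ᵥ x.2 ≠ x.1 := by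
  by_contra! hbad
  have hdc := card_mul_le_card_mul (s := univ) (t := S) (m := n) (n := Fintype.card K)
    (fun a x => circulant a *ᵥ x.2 = x.1) ?_ ?_
  · rw [card_univ, Fintype.card_fun, ZMod.card] at hdc
    linarith
  · intro a _
    obtain ⟨x, hxS, hx⟩ := hbad a
    calc n = #(univ : Finset (ZMod n)) := (ZMod.card n).symm
      _ ≤ _ := card_le_card_of_injOn _
          (fun k _ => mem_filter.mpr
            ⟨hS_shift x hxS k, by simp [circulant_mulVec_cyclicShift, hx]⟩)
          (injective_cyclicShift_pair hn (hS x hxS).1 (hS x hxS).2).injOn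
  · intro x hxS
    exact (card_le_card (filter_subset_filter _ (subset_univ _))).trans
      (card_filter_circulant_mulVec_eq_le hn hirr (hS x hxS).1 (hS x hxS).2)

end Counting

section Binary

variable {ι : Type*} [Fintype ι]

theorem hammingNorm_add_one_add_hammingNorm (z : ι → ZMod 2) :
    hammingNorm (z + 1) + hammingNorm z = Fintype.card ι := by
  have hflip : ∀ u : ZMod 2, u + 1 ≠ 0 ↔ ¬u ≠ 0 := by decide
  simp only [hammingNorm, Pi.add_apply, Pi.one_apply]
  rw [filter_congr fun i _ => hflip (z i), add_comm,
    card_filter_add_card_filter_not, card_univ]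

theorem two_pow_card_le_two_mul_card_hammingNorm_le [DecidableEq ι] :
    2 ^ Fintype.card ι ≤ 2 * #{z : ι → ZMod 2 | 2 * hammingNorm z ≤ Fintype.card ι} := by
  have hcompl : #{z : ι → ZMod 2 | ¬2 * hammingNorm z ≤ Fintype.card ι}
      ≤ #{z : ι → ZMod 2 | 2 * hammingNorm z ≤ Fintype.card ι} :=
    card_le_card_of_injOn (· + 1) (fun z hz => by
      have := hammingNorm_add_one_add_hammingNorm z
      simp only [coe_filter, mem_univ, true_and, Set.mem_ofPred_eq] at hz ⊢
      omega) (add_left_injective 1).injOn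
  have hsplit := card_filter_add_card_filter_not (s := univ)
    fun z : ι → ZMod 2 => 2 * hammingNorm z ≤ Fintype.card ι
  rw [card_univ, Fintype.card_fun, ZMod.card] at hsplit
  omega

theorem lt_of_two_mul_ballCardR_lt {n : ℕ} {w : ℝ} (h : 2 * ballCardR (2 * n) w < n * 2 ^ n) :
    w < n := by
  by_contra! hw
  have hball : #{z : Fin (2 * n) → ZMod 2 | 2 * hammingNorm z ≤ Fintype.card (Fin (2 * n))}
      ≤ ballCardR (2 * n) w + 1 := by
    rw [ballCardR]
    refine (card_le_card fun z hz => ?_).trans (card_insert_le 0 _)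
    rw [mem_insert, mem_filter]
    rw [mem_filter, Fintype.card_fin] at hz
    by_cases hz0 : z = 0
    · exact .inl hz0
    · exact .inr ⟨mem_univ _, hz0, le_trans (by exact_mod_cast (by omega : hammingNorm z ≤ n)) hw⟩
  have hpow := (two_pow_card_le_two_mul_card_hammingNorm_le (ι := Fin (2 * n))).trans
    (Nat.mul_le_mul_left 2 hball)
  rw [Fintype.card_fin, show 2 ^ (2 * n) = 2 ^ n * 2 ^ n by ring] at hpow
  have hn : n + 1 ≤ 2 ^ n := Nat.lt_two_pow_self
  have hn0 : n ≠ 0 := by rintro rfl; simp at h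
  have h2 : 2 ≤ 2 ^ n := Nat.le_self_pow hn0 2
  nlinarith

theorem card_pairs_eq_ballCardR [DecidableEq ι] (w : ℝ) :
    #{x : (ι → ZMod 2) × (ι → ZMod 2) |
      x ≠ 0 ∧ ((hammingNorm x.1 + hammingNorm x.2 : ℕ) : ℝ) ≤ w}
      = ballCardR (2 * Fintype.card ι) w := by
  let e : ι ⊕ ι ≃ Fin (2 * Fintype.card ι) := Fintype.equivFinOfCardEq (by simp [two_mul])
  let E := (Equiv.sumArrowEquivProdArrow ι ι (ZMod 2)).symm.trans (e.arrowCongr (Equiv.refl _))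
  have hE (x) : hammingNorm (E x) = hammingNorm x.1 + hammingNorm x.2 := by
    rw [← hammingNorm_sumElim, ← hammingNorm_comp_equiv _ e.symm]
    rfl
  refine card_equiv E fun x => ?_
  simp only [mem_filter, mem_univ, true_and, ne_eq, ← hammingNorm_eq_zero, hE,
    ← hammingNorm_add_hammingNorm_eq_zero_iff]

end Binary

theorem exists_circulant_forall_weight_gt {n : ℕ} [NeZero n] (hn : n.Prime)
    (hroot : orderOf (2 : ZMod n) = n - 1) {w : ℝ} (hB : 2 * ballCardR (2 * n) w < n * 2 ^ n) :
    ∃ a : ZMod n → ZMod 2, ∀ x : (ZMod n → ZMod 2) × (ZMod n → ZMod 2), x ≠ 0 →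
      circulant a *ᵥ x.2 = x.1 → w < ((hammingNorm x.1 + hammingNorm x.2 : ℕ) : ℝ) := by
  have hwn := lt_of_two_mul_ballCardR_lt hB
  have hodd : ¬2 ∣ n := by
    intro h2
    obtain rfl := (Nat.prime_dvd_prime_iff_eq Nat.prime_two hn).mp h2
    simp [show (2 : ZMod 2) = 0 from rfl, orderOf_zero] at hroot
  have hirr := irreducible_cyclotomic_zmod_of_orderOf_eq_totient hodd
    (by rw [Nat.cast_ofNat, hroot, Nat.totient_prime hn])
  set S : Finset ((ZMod n → ZMod 2) × (ZMod n → ZMod 2)) :=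
    {x | x ≠ 0 ∧ ((hammingNorm x.1 + hammingNorm x.2 : ℕ) : ℝ) ≤ w}
  have hS_shift : ∀ x ∈ S, ∀ k, Prod.map (cyclicShift k) (cyclicShift k) x ∈ S := fun x hx k => by
    simpa only [S, mem_filter, mem_univ, true_and, ne_eq, ← hammingNorm_add_hammingNorm_eq_zero_iff,
      Prod.map_fst, Prod.map_snd, hammingNorm_cyclicShift] using hx
  have hS_mem : ∀ x ∈ S, x ≠ 0 ∧ hammingNorm x.1 + hammingNorm x.2 < n := fun x hx => by
    obtain ⟨-, hx0, hxw⟩ := mem_filter.mp hx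
    exact ⟨hx0, by exact_mod_cast hxw.trans_lt hwn⟩
  have hS_card : Fintype.card (ZMod 2) * #S < n * Fintype.card (ZMod 2) ^ n := by
    rwa [ZMod.card, card_pairs_eq_ballCardR, ZMod.card]
  obtain ⟨a, ha⟩ := exists_forall_circulant_mulVec_ne hn hirr S hS_shift hS_mem hS_card
  refine ⟨a, fun x hx hax => ?_⟩
  by_contra! hxw
  exact ha x (mem_filter.mpr ⟨mem_univ _, hx, hxw⟩) hax

end DoubleCirculant

theorem double_circulant_gv_improved_general (p : ℕ) (hp : p.Prime)
    (hroot : orderOf (2 : ZMod p) = p - 1) (w : ℝ)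
    (hB : 2 * (ballCardR (2 * p) w : ℝ) < (p : ℝ) * 2 ^ p) :
    ∃ a : Fin p → ZMod 2,
      ∀ x : (Fin p → ZMod 2) × (Fin p → ZMod 2), x ≠ 0 →
        (∀ i : Fin p, x.1 i + ∑ j : Fin p, a (i - j) * x.2 j = 0) →
        w < ((hammingNorm x.1 + hammingNorm x.2 : ℕ) : ℝ) := by
  -- for `p = m + 1`, `ZMod p` and `Fin p` (with its subtraction) agree by definition
  obtain ⟨m, rfl⟩ := Nat.exists_eq_succ_of_ne_zero hp.ne_zero
  obtain ⟨a, ha⟩ := DoubleCirculant.exists_circulant_forall_weight_gt hp hroot (w := w)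
    (by exact_mod_cast hB)
  exact ⟨a, fun x hx hcode => ha x hx (funext fun i => (CharTwo.add_eq_zero.mp (hcode i)).symm)⟩

/-- Theorem 2 (th:simple) of the paper: if `p` is prime and `2` is primitive modulo `p`,
then for every positive real `w` with `2|B_{2p}(w)| < p·2^p` there exists a double circulant
`[2p, p]` code (parity-check matrix `[I_p | A]`, `A` circulant with entries `A_{ij} = a_{i-j}`)
of minimum distance `> w`. -/
theorem double_circulant_gv_improved (p : ℕ) (hp : p.Prime)
    (hroot : orderOf (2 : ZMod p) = p - 1) (w : ℝ) (hw : 0 < w)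
    (hB : 2 * (ballCardR (2 * p) w : ℝ) < (p : ℝ) * 2 ^ p) :
    ∃ a : Fin p → ZMod 2,
      ∀ x : (Fin p → ZMod 2) × (Fin p → ZMod 2), x ≠ 0 →
        (∀ i : Fin p, x.1 i + ∑ j : Fin p, a (i - j) * x.2 j = 0) →
        w < ((hammingNorm x.1 + hammingNorm x.2 : ℕ) : ℝ) :=
  double_circulant_gv_improved_general p hp hroot w hB
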